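/- arXiv:math/0010179 — 2 statements merged into one kernel-verified Lean document; each statement's English description precedes it below -/
import Mathlib

section
/- Let a13, a14, a15, a23, a24, a25 be real numbers satisfying the Goursat condition of the second kind: det of the matrix with rows (1,1,1), (a13,a14,a15), (a23,a24,a25) equals zero. Then a13²(a24 − a25) + a14²(a25 − a23) + a15²(a23 − a24) + a13·a23(a15 − a14) + a14·a24(a13 − a15) + a15·a25(a14 − a13) = 0. -/
theorem goursat_identity_31 (a13 a14 a15 a23 a24 a25 : ℝ)
    (hdet : Matrix.det !![1, 1, 1; a13, a14, a15; a23, a24, a25] = 0) :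
    a13 ^ 2 * (a24 - a25) + a14 ^ 2 * (a25 - a23) + a15 ^ 2 * (a23 - a24)
      + a13 * a23 * (a15 - a14) + a14 * a24 * (a13 - a15) + a15 * a25 * (a14 - a13) = 0 := by
  simp [Matrix.det_fin_three] at hdet
  linear_combination (a13+a14+a15) * hdet
end

section
/- Let b : Fin n → Fin n → ℝ satisfy b_{αβ} = b_{αγ} + b_{γβ} for all α, β, γ with γ ≠ α, β (equation (8)), and suppose n ≥ 3. Then b is antisymmetric: b_{αβ} = −b_{βα} for all α ≠ β, and moreover there exists a function c : Fin n → ℝ with b_{αβ} = c_α − c_β for all α ≠ β. -/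
theorem curvature_cocycle_antisymmetric_coboundary {n : ℕ} (hn : 3 ≤ n)
    (b : Fin n → Fin n → ℝ)
    (hb : ∀ α β γ : Fin n, γ ≠ α → γ ≠ β → b α β = b α γ + b γ β) :
    (∀ α β : Fin n, α ≠ β → b α β = - b β α) ∧
      ∃ c : Fin n → ℝ, ∀ α β : Fin n, α ≠ β → b α β = c α - c β := by
  have hpos : 0 < n := by omega
  -- existence of a third element
  have hthird : ∀ α β : Fin n, ∃ γ : Fin n, γ ≠ α ∧ γ ≠ β := by
    intro α β
    by_contra h
    push_neg at h
    have hsub : (Finset.univ : Finset (Fin n)) ⊆ {α, β} := by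
      intro γ _
      rcases eq_or_ne γ α with hc | hc
      · simp [hc]
      · simp [h γ hc]
    have := Finset.card_le_card hsub
    have h2 : ({α, β} : Finset (Fin n)).card ≤ 2 :=
      (Finset.card_insert_le _ _).trans (by simp)
    simp only [Finset.card_univ, Fintype.card_fin] at this
    omega
  -- antisymmetry for distinct pairs
  have hanti : ∀ α β : Fin n, α ≠ β → b α β = - b β α := by
    intro α β hab
    obtain ⟨γ, hγα, hγβ⟩ := hthird α β
    have h1 := hb γ β α (Ne.symm hγα) hab
    have h2 := hb γ α β (Ne.symm hγβ) (Ne.symm hab)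
    linarith
  refine ⟨hanti, ⟨fun α => b α ⟨0, hpos⟩, ?_⟩⟩
  set z : Fin n := ⟨0, hpos⟩
  -- diagonal vanishes
  have hdiag : ∀ δ : Fin n, b δ δ = 0 := by
    intro δ
    obtain ⟨γ, hγδ, _⟩ := hthird δ δ
    have h1 := hb δ δ γ hγδ hγδ
    have h2 := hanti δ γ (Ne.symm hγδ)
    linarith
  intro α β hab
  by_cases hαz : α = z
  · subst hαz
    have := hanti z β hab
    simp only [hdiag]
    linarith
  · by_cases hβz : β = z
    · subst hβz
      simp [hdiag]
    · have h1 := hb α β z (fun h => hαz h.symm) (fun h => hβz h.symm)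
      have h2 := hanti z β (fun h => hβz h.symm)
      linarith
end
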